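/- arXiv:1401.0174 — 9 statements merged into one kernel-verified Lean document; each statement's English description precedes it below -/
import Mathlib

section
/- Let S be a sphere in ℝ^d and p a point not on S. There exists a finite set Q ⊆ S with |Q| = O_d(1) such that the Voronoi cell of p in the Voronoi diagram of Q ∪ {p} does not intersect S; i.e., for every point y ∈ S there exists q ∈ Q with dist(y,q) ≤ dist(y,p). -/
open Metric

open RealInnerProductSpace
set_option maxHeartbeats 1000000

lemma my_le_of_sq {a b : ℝ} (ha : 0 ≤ a) (hb : 0 ≤ b) (h : a^2 ≤ b^2) : a ≤ b := by nlinarith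

lemma my_eq_one {a : ℝ} (h0 : 0 ≤ a) (h : a^2 = 1) : a = 1 := by
  have h1 : (a - 1) * (a + 1) = 0 := by linear_combination h
  rcases mul_eq_zero.1 h1 with h' | h'
  · linarith
  · linarith

lemma key_aux {s a b c ρ : ℝ} (hs0 : 0 < s) (hs2 : s^2 = 1-ρ^2) (hρ0 : 0 < ρ) (hρ1 : ρ < 1)
    (ha : 0 < a) (ha1 : a ≤ 1) (hc : 0 < c) (hc2 : 3*(1-ρ)/4 ≤ c^2)
    (hb : 19/20 * c ≤ b) : s^2/2 ≤ (s/a) * b := by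
  have hb0 : 0 ≤ b := le_trans (by positivity) hb
  have h1 : s ≤ s/a := by
    rw [le_div_iff₀ ha]
    nlinarith
  have h2 : s/2 ≤ 19/20*c := by
    apply my_le_of_sq (by positivity) (by positivity)
    rw [div_pow, mul_pow]
    nlinarith [sq_nonneg (1-ρ)]
  nlinarith [mul_le_mul_of_nonneg_right h1 hb0, mul_le_mul_of_nonneg_left hb hs0.le,
    mul_le_mul_of_nonneg_left h2 hs0.le]

lemma core (d : ℕ) (N : Finset (EuclideanSpace ℝ (Fin d)))
    (hNs : ↑N ⊆ sphere (0:EuclideanSpace ℝ (Fin d)) 1)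
    (hNnet : ∀ w ∈ sphere (0:EuclideanSpace ℝ (Fin d)) 1, ∃ n ∈ N, dist w n ≤ 1/20)
    (p : EuclideanSpace ℝ (Fin d)) (hp : ‖p‖ ≠ 1) :
    ∃ Q : Finset (EuclideanSpace ℝ (Fin d)), ↑Q ⊆ sphere (0:EuclideanSpace ℝ (Fin d)) 1 ∧
      Q.card ≤ N.card + 2 ∧ ∀ y, ‖y‖ = 1 → ∃ q ∈ Q, dist y q ≤ dist y p := by
  classical
  rcases le_or_gt 1 ‖p‖ with hout | hin
  · -- p outside the ball: radial projection suffices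
    have hρ0 : (0:ℝ) < ‖p‖ := lt_of_lt_of_le one_pos hout
    have hqn : ‖(‖p‖⁻¹ • p)‖ = 1 := by
      rw [norm_smul, Real.norm_eq_abs, abs_of_pos (inv_pos.2 hρ0), inv_mul_cancel₀ hρ0.ne']
    refine ⟨{‖p‖⁻¹ • p}, ?_, by simp, ?_⟩
    · intro q hq
      simp only [Finset.coe_singleton, Set.mem_singleton_iff] at hq
      simp [hq, mem_sphere_zero_iff_norm, hqn]
    · intro y hy
      refine ⟨_, Finset.mem_singleton_self _, ?_⟩
      have ht : ⟪y, p⟫ ≤ ‖p‖ := le_trans (real_inner_le_norm y p) (by rw [hy]; ring_nf; rfl)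
      set ρ := ‖p‖ with hρdef
      set t := ⟪y, p⟫ with htdef
      rw [dist_eq_norm, dist_eq_norm]
      apply my_le_of_sq (norm_nonneg _) (norm_nonneg _)
      have h1 : ‖y - ρ⁻¹ • p‖^2 = ‖y‖^2 - 2 * (ρ⁻¹ * t) + ρ⁻¹^2 * ρ^2 := by
        rw [norm_sub_sq_real, real_inner_smul_right, norm_smul, Real.norm_eq_abs]
        simp [abs_of_pos (inv_pos.2 hρ0), mul_pow, htdef]; exact Or.inl rfl
      have h2 : ‖y - p‖^2 = ‖y‖^2 - 2 * t + ρ^2 := by rw [norm_sub_sq_real]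
      have h3 : ρ⁻¹^2 * ρ^2 = 1 := by rw [← mul_pow, inv_mul_cancel₀ hρ0.ne']; norm_num
      have h5 : 2 - 2*(ρ⁻¹*t) ≤ 1 - 2*t + ρ^2 := by
        rw [← mul_le_mul_iff_right₀ hρ0]
        have he : ρ*(2 - 2*(ρ⁻¹*t)) = 2*ρ - 2*t := by field_simp
        rw [he]
        nlinarith [mul_nonneg (sub_nonneg.2 hout) (sub_nonneg.2 ht), sq_nonneg (ρ-1)]
      rw [h1, h2, hy, h3]; linarith
  · rcases eq_or_ne p 0 with rfl | hp0
    · -- p is the center: the net itself works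
      refine ⟨N, hNs, by omega, fun y hy => ?_⟩
      obtain ⟨n, hn, hdn⟩ := hNnet y (by simp [mem_sphere_zero_iff_norm, hy])
      refine ⟨n, hn, ?_⟩
      have h0 : dist y (0:EuclideanSpace ℝ (Fin d)) = 1 := by simp [hy]
      rw [h0]; linarith
    · -- p strictly inside, not the center
      set ρ := ‖p‖ with hρdef
      have hρ0 : 0 < ρ := norm_pos_iff.2 hp0
      have hρ1 : ρ < 1 := hin
      clear_value ρ
      obtain ⟨u, hu, hpu⟩ : ∃ u : EuclideanSpace ℝ (Fin d), ‖u‖ = 1 ∧ p = ρ • u := by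
        refine ⟨ρ⁻¹ • p, ?_, ?_⟩
        · rw [norm_smul, Real.norm_eq_abs, abs_of_pos (inv_pos.2 hρ0), ← hρdef,
            inv_mul_cancel₀ hρ0.ne']
        · rw [smul_smul, mul_inv_cancel₀ hρ0.ne', one_smul]
      have huu : ⟪u, u⟫ = 1 := by rw [real_inner_self_eq_norm_sq, hu]; norm_num
      obtain ⟨s, hs0, hs2⟩ : ∃ s : ℝ, 0 < s ∧ s^2 = 1 - ρ^2 :=
        ⟨Real.sqrt (1 - ρ^2), Real.sqrt_pos.2 (by nlinarith), Real.sq_sqrt (by nlinarith)⟩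
      set g : EuclideanSpace ℝ (Fin d) → EuclideanSpace ℝ (Fin d) :=
        fun n => n - ⟪n, u⟫ • u with hgdef
      have hgu : ∀ n, ⟪u, g n⟫ = 0 := by
        intro n
        simp only [hgdef, inner_sub_right, real_inner_smul_right, huu]
        rw [real_inner_comm u n]; ring
      set f : EuclideanSpace ℝ (Fin d) → EuclideanSpace ℝ (Fin d) :=
        fun n => if g n = 0 then u else ρ • u + (s/‖g n‖) • g n with hfdef
      clear_value g f
      have hfn : ∀ n, ‖f n‖ = 1 := by
        intro n
        simp only [hfdef]
        split_ifs with hg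
        · exact hu
        · have hgpos : 0 < ‖g n‖ := norm_pos_iff.2 hg
          apply my_eq_one (norm_nonneg _)
          rw [norm_add_sq_real, real_inner_smul_left, real_inner_smul_right, hgu,
            norm_smul, norm_smul, Real.norm_eq_abs, Real.norm_eq_abs,
            abs_of_pos hρ0, abs_of_pos (div_pos hs0 hgpos), hu]
          rw [div_mul_cancel₀ s hgpos.ne']
          linear_combination hs2
      refine ⟨insert u (insert (-u) (N.image f)), ?_, ?_, ?_⟩
      · intro q hq
        simp only [Finset.coe_insert, Set.mem_insert_iff, Finset.coe_image,
          Set.mem_image, Finset.mem_coe] at hq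
        rw [mem_sphere_zero_iff_norm]
        rcases hq with rfl | rfl | ⟨n, _, rfl⟩
        · exact hu
        · rw [norm_neg]; exact hu
        · exact hfn n
      · calc (insert u (insert (-u) (N.image f))).card
            ≤ (insert (-u) (N.image f)).card + 1 := Finset.card_insert_le _ _
          _ ≤ (N.image f).card + 1 + 1 := Nat.add_le_add_right (Finset.card_insert_le _ _) 1
          _ ≤ N.card + 2 := by
              have := Finset.card_image_le (s := N) (f := f)
              omega
      · intro y hy
        set t := ⟪y, u⟫ with htdef
        clear_value t
        have htabs : |t| ≤ 1 := by
          have := abs_real_inner_le_norm y u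
          rw [hy, hu] at this; simpa [htdef] using this
        have hyp : ⟪y, p⟫ = ρ * t := by rw [hpu, real_inner_smul_right, htdef]
        have hdyp : ‖y - p‖^2 = 1 + ρ^2 - 2*(ρ*t) := by
          rw [norm_sub_sq_real, hy, hyp, ← hρdef]; ring
        rcases le_or_gt ((1+ρ)/2) t with hA | hA
        · refine ⟨u, Finset.mem_insert_self _ _, ?_⟩
          rw [dist_eq_norm, dist_eq_norm]
          apply my_le_of_sq (norm_nonneg _) (norm_nonneg _)
          have h1 : ‖y - u‖^2 = 2 - 2*t := by
            rw [norm_sub_sq_real, hy, hu, ← htdef]; ring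
          rw [h1, hdyp]; nlinarith
        rcases le_or_gt t (-(1-ρ)/2) with hB | hB
        · refine ⟨-u, Finset.mem_insert_of_mem (Finset.mem_insert_self _ _), ?_⟩
          rw [dist_eq_norm, dist_eq_norm]
          apply my_le_of_sq (norm_nonneg _) (norm_nonneg _)
          have h1 : ‖y - (-u)‖^2 = 2 + 2*t := by
            rw [sub_neg_eq_add, norm_add_sq_real, hy, hu, ← htdef]; ring
          rw [h1, hdyp]; nlinarith
        · -- middle band
          set w : EuclideanSpace ℝ (Fin d) := y - t • u with hwdef
          clear_value w
          have hwu : ⟪w, u⟫ = 0 := by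
            rw [hwdef, inner_sub_left, real_inner_smul_left, huu, ← htdef]; ring
          have hww : ‖w‖^2 = 1 - t^2 := by
            rw [hwdef, norm_sub_sq_real, real_inner_smul_right, norm_smul, Real.norm_eq_abs,
              hy, hu, ← htdef, mul_pow, sq_abs]
            ring
          have hw2 : 3*(1-ρ)/4 ≤ ‖w‖^2 := by
            rw [hww]
            nlinarith [mul_pos (sub_pos.2 hA) (show (0:ℝ) < t + (1-ρ)/2 by linarith)]
          have hwne : w ≠ 0 := by
            intro h
            rw [h, norm_zero] at hw2
            nlinarith
          have hwpos : 0 < ‖w‖ := norm_pos_iff.2 hwne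
          set v := ‖w‖⁻¹ • w with hvdef
          clear_value v
          have hv : ‖v‖ = 1 := by
            rw [hvdef, norm_smul, Real.norm_eq_abs, abs_of_pos (inv_pos.2 hwpos),
              inv_mul_cancel₀ hwpos.ne']
          obtain ⟨n, hnN, hn⟩ := hNnet v (by rw [mem_sphere_zero_iff_norm]; exact hv)
          have hnnorm : ‖n‖ = 1 := mem_sphere_zero_iff_norm.1 (hNs hnN)
          have hvn20 : ‖v - n‖ ≤ 1/20 := by rw [← dist_eq_norm]; exact hn
          have hvn : (19:ℝ)/20 ≤ ⟪v, n⟫ := by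
            have e1 : ⟪v, n⟫ = ⟪v, v⟫ - ⟪v, v - n⟫ := by rw [inner_sub_right]; ring
            have e2 : ⟪v, v⟫ = 1 := by rw [real_inner_self_eq_norm_sq, hv]; norm_num
            have e3 : ⟪v, v - n⟫ ≤ ‖v‖ * ‖v - n‖ := real_inner_le_norm _ _
            rw [hv, one_mul] at e3
            linarith
          have hwn : (19:ℝ)/20 * ‖w‖ ≤ ⟪w, n⟫ := by
            have e1 : ⟪v, n⟫ = ‖w‖⁻¹ * ⟪w, n⟫ := by rw [hvdef, real_inner_smul_left]
            have e2 : ⟪w, n⟫ = ‖w‖ * ⟪v, n⟫ := by rw [e1, ← mul_assoc, mul_inv_cancel₀ hwpos.ne', one_mul]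
            rw [e2]
            nlinarith
          have hnu : |⟪n, u⟫| ≤ 1/20 := by
            have e0 : ⟪v, u⟫ = 0 := by rw [hvdef, real_inner_smul_left, hwu]; ring
            have e1 : ⟪n, u⟫ = ⟪n - v, u⟫ := by rw [inner_sub_left, e0]; ring
            calc |⟪n, u⟫| = |⟪n - v, u⟫| := by rw [e1]
              _ ≤ ‖n - v‖ * ‖u‖ := abs_real_inner_le_norm _ _
              _ ≤ 1/20 := by rw [hu, mul_one, norm_sub_rev]; exact hvn20
          have hG2 : ‖g n‖^2 = 1 - ⟪n, u⟫^2 := by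
            simp only [hgdef]
            rw [norm_sub_sq_real, real_inner_smul_right, norm_smul, Real.norm_eq_abs, hu,
              hnnorm, mul_one, sq_abs]
            ring
          have hGle : ‖g n‖ ≤ 1 := by
            apply my_le_of_sq (norm_nonneg _) zero_le_one
            rw [hG2, one_pow]
            nlinarith [sq_nonneg ⟪n, u⟫]
          have hwG : ⟪w, g n⟫ = ⟪w, n⟫ := by
            simp only [hgdef]
            rw [inner_sub_right, real_inner_smul_right, hwu]; ring
          have hwGpos : 0 < ⟪w, g n⟫ := by rw [hwG]; nlinarith
          have hGne : g n ≠ 0 := by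
            intro h
            rw [h, inner_zero_right] at hwGpos
            exact lt_irrefl 0 hwGpos
          have hGpos : 0 < ‖g n‖ := norm_pos_iff.2 hGne
          have hqdef : f n = ρ • u + (s/‖g n‖) • g n := by simp only [hfdef, if_neg hGne]
          refine ⟨f n, Finset.mem_insert_of_mem (Finset.mem_insert_of_mem
            (Finset.mem_image_of_mem f hnN)), ?_⟩
          rw [dist_eq_norm, dist_eq_norm]
          apply my_le_of_sq (norm_nonneg _) (norm_nonneg _)
          have hyG : ⟪y, g n⟫ = ⟪w, g n⟫ := by
            have hy' : y = w + t • u := by rw [hwdef]; abel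
            rw [hy', inner_add_left, real_inner_smul_left, hgu n]; ring
          have hyq : ⟪y, f n⟫ = ρ * t + (s/‖g n‖) * ⟪w, g n⟫ := by
            rw [hqdef, inner_add_right, real_inner_smul_right, real_inner_smul_right,
              hyG, ← htdef]
          have key : s^2/2 ≤ (s/‖g n‖) * ⟪w, g n⟫ :=
            key_aux hs0 hs2 hρ0 hρ1 hGpos hGle hwpos hw2 (by rw [hwG]; exact hwn)
          have e1 : ‖y - f n‖^2 = 2 - 2*⟪y, f n⟫ := by
            rw [norm_sub_sq_real, hy, hfn n]; ring
          rw [e1, hdyp, hyq]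
          linarith [key, hs2]

lemma exists_net (d : ℕ) :
    ∃ N : Finset (EuclideanSpace ℝ (Fin d)), ↑N ⊆ sphere (0:EuclideanSpace ℝ (Fin d)) 1 ∧
      ∀ w ∈ sphere (0:EuclideanSpace ℝ (Fin d)) 1, ∃ n ∈ N, dist w n ≤ 1/20 := by
  obtain ⟨b, hb, hbfin, hcov⟩ :=
    (isCompact_sphere (0:EuclideanSpace ℝ (Fin d)) 1).elim_finite_subcover_image
      (fun i _ => isOpen_ball (x := i) (ε := (1/20:ℝ)))
      (fun x hx => Set.mem_iUnion₂.2 ⟨x, hx, mem_ball_self (by norm_num)⟩)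
  refine ⟨hbfin.toFinset, by simpa using hb, fun w hw => ?_⟩
  obtain ⟨n, hn, hwn⟩ := Set.mem_iUnion₂.1 (hcov hw)
  exact ⟨n, hbfin.mem_toFinset.2 hn, (mem_ball.1 hwn).le⟩

/-- For every dimension `d` there is a constant `C` such that for any sphere `S` and any
point `p ∉ S`, there is a set `Q ⊆ S` of at most `C` points such that every point of `S`
is at least as close to some point of `Q` as to `p` (so the Voronoi cell of `p` in
`Vor(Q ∪ {p})` does not meet `S`). -/
theorem blocker_set_exists (d : ℕ) :
    ∃ C : ℕ,
      ∀ (c : EuclideanSpace ℝ (Fin d)) (r : ℝ) (p : EuclideanSpace ℝ (Fin d)),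
        p ∉ sphere c r →
        ∃ Q : Finset (EuclideanSpace ℝ (Fin d)),
          ↑Q ⊆ sphere c r ∧ Q.card ≤ C ∧
          ∀ y ∈ sphere c r, ∃ q ∈ Q, dist y q ≤ dist y p := by
  classical
  obtain ⟨N, hNs, hNnet⟩ := exists_net d
  refine ⟨N.card + 2, fun c r p hp => ?_⟩
  rcases lt_trichotomy r 0 with hr | rfl | hr
  · refine ⟨∅, by simp, by simp, fun y hy => ?_⟩
    exfalso
    have := mem_sphere.1 hy
    have h2 : (0:ℝ) ≤ dist y c := dist_nonneg
    linarith
  · refine ⟨{c}, ?_, by simp, fun y hy => ?_⟩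
    · intro q hq
      simp only [Finset.coe_singleton, Set.mem_singleton_iff] at hq
      simp [hq]
    · have hyc : y = c := by simpa [dist_eq_zero] using mem_sphere.1 hy
      exact ⟨c, Finset.mem_singleton_self _, by simp [hyc, dist_nonneg]⟩
  · set p' : EuclideanSpace ℝ (Fin d) := r⁻¹ • (p - c) with hp'def
    have hp' : ‖p'‖ ≠ 1 := by
      intro h
      apply hp
      rw [mem_sphere, dist_eq_norm]
      rw [hp'def, norm_smul, Real.norm_eq_abs, abs_of_pos (inv_pos.2 hr)] at h
      have : ‖p - c‖ = r := by
        field_simp at h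
        linarith [h]
      linarith [this]
    obtain ⟨Q', hQ's, hcard, hcov⟩ := core d N hNs hNnet p' hp'
    have hrp' : c + r • p' = p := by
      rw [hp'def, smul_smul, mul_inv_cancel₀ hr.ne', one_smul]; abel
    refine ⟨Q'.image (fun q => c + r • q), ?_, ?_, ?_⟩
    · intro x hx
      simp only [Finset.coe_image, Set.mem_image, Finset.mem_coe] at hx
      obtain ⟨q, hq, rfl⟩ := hx
      have hq1 : ‖q‖ = 1 := mem_sphere_zero_iff_norm.1 (hQ's hq)
      rw [mem_sphere, dist_eq_norm]
      have : c + r • q - c = r • q := by abel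
      rw [this, norm_smul, Real.norm_eq_abs, abs_of_pos hr, hq1, mul_one]
    · exact le_trans (Finset.card_image_le) hcard
    · intro y hy
      set y' : EuclideanSpace ℝ (Fin d) := r⁻¹ • (y - c) with hy'def
      have hy' : ‖y'‖ = 1 := by
        rw [hy'def, norm_smul, Real.norm_eq_abs, abs_of_pos (inv_pos.2 hr), ← dist_eq_norm,
          mem_sphere.1 hy, inv_mul_cancel₀ hr.ne']
      have hry' : r • y' = y - c := by
        rw [hy'def, smul_smul, mul_inv_cancel₀ hr.ne', one_smul]
      have hkey : ∀ z : EuclideanSpace ℝ (Fin d), dist y (c + r • z) = r * dist y' z := by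
        intro z
        rw [dist_eq_norm, dist_eq_norm]
        have : y - (c + r • z) = r • (y' - z) := by
          rw [smul_sub, hry']; abel
        rw [this, norm_smul, Real.norm_eq_abs, abs_of_pos hr]
      obtain ⟨q', hq', hle⟩ := hcov y' hy'
      refine ⟨c + r • q', Finset.mem_image_of_mem _ hq', ?_⟩
      rw [hkey q', ← hrp', hkey p']
      exact mul_le_mul_of_nonneg_left hle hr.le
end

section
/- Let p be a point in ℝ^d, let C be a set of unit vectors of angular diameter at most π/3 (i.e., the angle between any two vectors of C is at most π/3), and let Cone(p,C) = {p + t·v : v ∈ C, t ≥ 0}. Let S be a sphere with Cone(p,C) ∩ S nonempty and p ∉ S, and let q be a closest point of Cone(p,C) ∩ S to p. Then every point y ∈ Cone(p,C) ∩ S satisfies dist(y,q) ≤ dist(y,p). -/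
open Metric

/-- Cone blocking lemma: if `C` is a set of unit vectors with pairwise angle at most `π/3`,
`Cone(p,C) = {p + t•v : v ∈ C, t ≥ 0}`, `S` is a sphere with `p ∉ S`, and `q` is a closest
point of `Cone(p,C) ∩ S` to `p`, then every `y ∈ Cone(p,C) ∩ S` satisfies
`dist y q ≤ dist y p`. -/
theorem cone_closest_point_blocks (d : ℕ) (p : EuclideanSpace ℝ (Fin d))
    (C : Set (EuclideanSpace ℝ (Fin d)))
    (hunit : ∀ v ∈ C, ‖v‖ = 1)
    (hangle : ∀ u ∈ C, ∀ v ∈ C, InnerProductGeometry.angle u v ≤ Real.pi / 3)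
    (c : EuclideanSpace ℝ (Fin d)) (r : ℝ)
    (hp : p ∉ sphere c r)
    (q : EuclideanSpace ℝ (Fin d))
    (hq : q ∈ {x | ∃ v ∈ C, ∃ t : ℝ, 0 ≤ t ∧ x = p + t • v} ∩ sphere c r)
    (hqclosest : ∀ x ∈ {x | ∃ v ∈ C, ∃ t : ℝ, 0 ≤ t ∧ x = p + t • v} ∩ sphere c r,
        dist p q ≤ dist p x) :
    ∀ y ∈ {x | ∃ v ∈ C, ∃ t : ℝ, 0 ≤ t ∧ x = p + t • v} ∩ sphere c r,
      dist y q ≤ dist y p := by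
  rintro y ⟨⟨v, hv, t, ht, rfl⟩, hyS⟩
  obtain ⟨⟨u, hu, s, hs, rfl⟩, hqS⟩ := hq
  have hvn := hunit v hv
  have hun := hunit u hu
  have hdpq : dist p (p + s • u) = s := by
    simp [dist_eq_norm, norm_smul, hun, abs_of_nonneg hs]
  have hdpy : dist p (p + t • v) = t := by
    simp [dist_eq_norm, norm_smul, hvn, abs_of_nonneg ht]
  have hst : s ≤ t := by
    have := hqclosest (p + t • v) ⟨⟨v, hv, t, ht, rfl⟩, hyS⟩
    rwa [hdpq, hdpy] at this
  have hinner : (1:ℝ)/2 ≤ inner ℝ v u := by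
    have hang := hangle v hv u hu
    have hcos := InnerProductGeometry.cos_angle v u
    rw [hvn, hun] at hcos
    have h1 : Real.cos (Real.pi / 3) ≤ Real.cos (InnerProductGeometry.angle v u) :=
      Real.cos_le_cos_of_nonneg_of_le_pi (InnerProductGeometry.angle_nonneg v u)
        (by linarith [Real.pi_pos]) hang
    rw [Real.cos_pi_div_three] at h1
    rw [hcos] at h1
    linarith [h1]
  have hsq : dist (p + t • v) (p + s • u) ^ 2 ≤ t ^ 2 := by
    rw [dist_eq_norm]
    have heq : (p + t • v) - (p + s • u) = t • v - s • u := by abel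
    rw [heq]
    have hexp : ‖t • v - s • u‖ ^ 2 = t ^ 2 - 2 * (t * s * inner ℝ v u) + s ^ 2 := by
      rw [norm_sub_sq_real, norm_smul, norm_smul, real_inner_smul_left,
        real_inner_smul_right, hvn, hun]
      rw [Real.norm_eq_abs, Real.norm_eq_abs, abs_of_nonneg ht, abs_of_nonneg hs]
      ring
    rw [hexp]
    nlinarith [hinner, hs, hst, mul_nonneg hs (sub_nonneg.2 hst), mul_nonneg hs (hs.trans hst)]
  have hfin : dist (p + t • v) (p + s • u) ≤ t := by
    nlinarith [dist_nonneg (x := p + t • v) (y := p + s • u), hsq, ht]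
  rw [dist_comm p (p + t • v)] at hdpy
  rw [hdpy]
  exact hfin
end

section
/- Let P ⊆ ℝ^d with |P| = n, let c ∈ ℝ^d, r > 0, and let ℓ(r') = r'/n^{1/d}. If r' is chosen uniformly at random from [r, 2r], then the expected number of points p ∈ P with |dist(p,c) − r'| ≤ ℓ(r') is at most 4·n^{1−1/d}. -/
open Metric MeasureTheory

/-- Expected number of points near a random sphere: if `r'` is chosen uniformly at random
from `[r, 2r]`, the expected number of points `p ∈ P` with
`|dist p c − r'| ≤ r' / n^(1/d)` is at most `4 · n^(1−1/d)`. -/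
theorem expected_points_near_random_sphere (d n : ℕ) (hd : 1 ≤ d) (hn : 1 ≤ n)
    (P : Finset (EuclideanSpace ℝ (Fin d))) (hP : P.card = n)
    (c : EuclideanSpace ℝ (Fin d)) (r : ℝ) (hr : 0 < r) :
    (1 / r) * ∫ r' in r..(2 * r),
        (((↑P : Set _) ∩
          {p | |dist p c - r'| ≤ r' / (n : ℝ) ^ ((1 : ℝ) / d)}).ncard : ℝ)
      ≤ 4 * (n : ℝ) ^ ((1 : ℝ) - 1 / d) := by
  classical
  have hn0 : (0:ℝ) < (n:ℝ) := by exact_mod_cast hn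
  set N : ℝ := (n:ℝ) ^ ((1:ℝ)/d) with hNdef
  have hN1 : (1:ℝ) ≤ N := Real.one_le_rpow (by exact_mod_cast hn) (by positivity)
  have hN0 : (0:ℝ) < N := lt_of_lt_of_le one_pos hN1
  have hle : r ≤ 2 * r := by linarith
  set A : EuclideanSpace ℝ (Fin d) → Set ℝ :=
    fun p => {r' : ℝ | |dist p c - r'| ≤ r' / N} with hAdef
  have hAmeas : ∀ p, MeasurableSet (A p) := by
    intro p
    have : A p = {r' : ℝ | |dist p c - r'| - r' / N ≤ 0} := by
      ext x; simp [hAdef, sub_nonpos]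
    rw [this]
    exact (isClosed_le (((continuous_const.sub continuous_id).abs).sub ((continuous_id.div_const N))) continuous_const).measurableSet
  have hcount : ∀ r' : ℝ,
      (((↑P : Set _) ∩ {p | |dist p c - r'| ≤ r' / N}).ncard : ℝ)
        = ∑ p ∈ P, (A p).indicator (fun _ => (1:ℝ)) r' := by
    intro r'
    have h1 : (↑P : Set _) ∩ {p | |dist p c - r'| ≤ r' / N}
        = ↑(P.filter (fun p => |dist p c - r'| ≤ r' / N)) := by
      ext p; simp [and_comm]
    rw [h1, Set.ncard_coe_finset, Finset.card_filter]
    push_cast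
    refine Finset.sum_congr rfl fun p _ => ?_
    by_cases h : |dist p c - r'| ≤ r' / N <;> simp [Set.indicator, hAdef, h]
  have hint : ∀ p ∈ P, IntervalIntegrable ((A p).indicator (fun _ => (1:ℝ)))
      volume r (2 * r) := by
    intro p _
    apply IntegrableOn.intervalIntegrable
    rw [Set.uIcc_of_le hle]
    exact (integrableOn_const measure_Icc_lt_top.ne).indicator (hAmeas p)
  have hbound : ∀ p ∈ P,
      (∫ r' in r..(2 * r), (A p).indicator (fun _ => (1:ℝ)) r') ≤ 4 * r / N := by
    intro p _
    rw [intervalIntegral.integral_of_le hle, integral_indicator_const (1:ℝ) (hAmeas p)]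
    rw [smul_eq_mul, mul_one, measureReal_def, Measure.restrict_apply (hAmeas p)]
    have hsub : A p ∩ Set.Ioc r (2*r)
        ⊆ Set.Icc (dist p c - 2*r/N) (dist p c + 2*r/N) := by
      rintro x ⟨hx1, hx2, hx3⟩
      have hxN : x / N ≤ 2*r/N := by gcongr
      have h2 := abs_le.1 ((le_trans hx1 hxN))
      constructor <;> linarith [h2.1, h2.2]
    calc (volume (A p ∩ Set.Ioc r (2*r))).toReal
        ≤ (volume (Set.Icc (dist p c - 2*r/N) (dist p c + 2*r/N))).toReal := by
          apply ENNReal.toReal_mono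
          · rw [Real.volume_Icc]; exact ENNReal.ofReal_ne_top
          · exact measure_mono hsub
      _ = 4 * r / N := by
          rw [Real.volume_Icc]
          have : dist p c + 2*r/N - (dist p c - 2*r/N) = 4*r/N := by ring
          rw [this, ENNReal.toReal_ofReal (by positivity)]
  simp only [hcount]
  rw [intervalIntegral.integral_finset_sum hint]
  have hsum : (∑ p ∈ P, ∫ r' in r..(2*r), (A p).indicator (fun _ => (1:ℝ)) r')
      ≤ (n:ℝ) * (4*r/N) := by
    calc (∑ p ∈ P, ∫ r' in r..(2*r), (A p).indicator (fun _ => (1:ℝ)) r')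
        ≤ ∑ _p ∈ P, 4*r/N := Finset.sum_le_sum hbound
      _ = (n:ℝ) * (4*r/N) := by rw [Finset.sum_const, hP, nsmul_eq_mul]
  calc (1/r) * (∑ p ∈ P, ∫ r' in r..(2*r), (A p).indicator (fun _ => (1:ℝ)) r')
      ≤ (1/r) * ((n:ℝ) * (4*r/N)) := by
        exact mul_le_mul_of_nonneg_left hsum (by positivity)
    _ = 4 * ((n:ℝ)/N) := by field_simp
    _ = 4 * (n:ℝ) ^ ((1:ℝ) - 1/d) := by
        rw [Real.rpow_sub hn0, Real.rpow_one, hNdef]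
end

section
/- Let F be a k-dimensional flat in ℝ^d and H a family of at least k+1 closed halfflats of F (intersections of closed halfspaces with F). If ⋃H = F, then some subfamily of H of size k+1 already covers F. -/
open scoped RealInnerProductSpace

/-- Helly-type covering lemma: if a finite family `H` of at least `k+1` closed halfflats
of a `k`-flat `F` covers `F`, then some subfamily of size `k+1` already covers `F`.
Halfflats are encoded by pairs `(a, b)` giving `{x ∈ F | ⟪a, x⟫ ≤ b}`. -/
theorem helly_halfflat_cover (d k : ℕ)
    (F : AffineSubspace ℝ (EuclideanSpace ℝ (Fin d)))
    (hF : Module.finrank ℝ F.direction = k)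
    (H : Finset (EuclideanSpace ℝ (Fin d) × ℝ))
    (hcard : k + 1 ≤ H.card)
    (hcover : (F : Set (EuclideanSpace ℝ (Fin d))) ⊆
        ⋃ h ∈ H, {x : EuclideanSpace ℝ (Fin d) | ⟪h.1, x⟫ ≤ h.2}) :
    ∃ H' ⊆ H, H'.card = k + 1 ∧
      (F : Set (EuclideanSpace ℝ (Fin d))) ⊆
        ⋃ h ∈ H', {x : EuclideanSpace ℝ (Fin d) | ⟪h.1, x⟫ ≤ h.2} := by
  classical
  by_contra hcon
  push_neg at hcon
  -- F must be nonempty, otherwise any subfamily works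
  rcases Set.eq_empty_or_nonempty (F : Set (EuclideanSpace ℝ (Fin d))) with hFe | ⟨p, hp⟩
  · obtain ⟨H', hH'sub, hH'card⟩ := Finset.exists_subset_card_eq hcard
    exact (hcon H' hH'sub hH'card (by rw [hFe]; exact Set.empty_subset _)).elim
  -- Work in the direction space V
  set V := F.direction with hV
  -- complements of the halfflats, translated to V
  set G : EuclideanSpace ℝ (Fin d) × ℝ → Set V :=
    fun h => {v : V | h.2 < ⟪h.1, p + (v : EuclideanSpace ℝ (Fin d))⟫} with hG
  have h_convex : ∀ h ∈ H, Convex ℝ (G h) := by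
    intro h _
    have hlin : IsLinearMap ℝ (fun v : V => ⟪h.1, (v : EuclideanSpace ℝ (Fin d))⟫) := by
      constructor
      · intro v w; simp [inner_add_right]
      · intro c v; simp [inner_smul_right]
    have := convex_halfSpace_gt hlin (h.2 - ⟪h.1, p⟫)
    suffices e : G h = {w : V | h.2 - ⟪h.1, p⟫ < ⟪h.1, (w : EuclideanSpace ℝ (Fin d))⟫} by rw [e]; exact this
    ext v
    simp only [hG, Set.mem_setOf_eq, inner_add_right]
    constructor <;> intro hx <;> linarith
  have h_inter : ∀ I ⊆ H, I.card = Module.finrank ℝ V + 1 → (⋂ h ∈ I, G h).Nonempty := by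
    intro I hIsub hIcard
    rw [hF] at hIcard
    have := hcon I hIsub hIcard
    rw [Set.not_subset] at this
    obtain ⟨x, hxF, hxn⟩ := this
    have hxV : x - p ∈ V := by
      simpa using AffineSubspace.vsub_mem_direction hxF hp
    refine ⟨⟨x - p, hxV⟩, ?_⟩
    rw [Set.mem_iInter₂]
    intro h hhI
    simp only [hG, Set.mem_setOf_eq]
    have : ¬ ⟪h.1, x⟫ ≤ h.2 := by
      intro hle
      exact hxn (Set.mem_biUnion hhI hle)
    have hx : p + (x - p) = x := by abel
    rw [hx]
    linarith
  have h_card : Module.finrank ℝ V + 1 ≤ H.card := by rw [hF]; exact hcard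
  obtain ⟨v, hv⟩ := Convex.helly_theorem h_card h_convex h_inter
  rw [Set.mem_iInter₂] at hv
  have hpv : p + (v : EuclideanSpace ℝ (Fin d)) ∈ F := by
    simpa [add_comm] using AffineSubspace.vadd_mem_of_mem_direction v.2 hp
  obtain ⟨s, hs⟩ := Set.mem_iUnion.mp (hcover hpv)
  simp only [Set.mem_iUnion, Set.mem_setOf_eq, exists_prop] at hs
  obtain ⟨hsH, hle⟩ := hs
  exact absurd hle (not_le.mpr (hv s hsH))
end

section
/- Let f be a k-dimensional simplex contained in a k-flat F = span(f) in ℝ^d, let H be a set of halfflats of F, and let Shell(f) be the set of k+1 open halfflats of F covering F ∖ f, each bounded by the affine span of a facet of f and disjoint from the relative interior of f. Then ⋃H ⊇ f if and only if there exists a subset of H ∪ Shell(f) of size k+1 that covers all of F. -/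
open scoped RealInnerProductSpace

/-- Covering a simplex versus covering its spanning flat: let `f` be a `k`-simplex with
vertex set `p`, `F = span f` its spanning flat, and `Shell f` the `k+1` open halfflats of
`F` (one per facet) covering `F ∖ f` and disjoint from `f`. Then a family `H` of closed
halfflats of `F` covers `f` iff some `k+1` members of `H ∪ Shell(f)` cover all of `F`. -/
theorem simplex_cover_iff_flat_cover (d k : ℕ)
    (p : Fin (k + 1) → EuclideanSpace ℝ (Fin d))
    (hp : AffineIndependent ℝ p)
    (a : Fin (k + 1) → EuclideanSpace ℝ (Fin d)) (b : Fin (k + 1) → ℝ)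
    -- the shell halfflats cover `F ∖ f` ...
    (hshell_cover : (↑(affineSpan ℝ (Set.range p)) : Set (EuclideanSpace ℝ (Fin d))) \
        convexHull ℝ (Set.range p) ⊆
        ⋃ i, {x : EuclideanSpace ℝ (Fin d) | x ∈ affineSpan ℝ (Set.range p) ∧ ⟪a i, x⟫ < b i})
    -- ... and none of them meets `f`
    (hshell_disj : ∀ i,
        {x : EuclideanSpace ℝ (Fin d) | x ∈ affineSpan ℝ (Set.range p) ∧ ⟪a i, x⟫ < b i} ∩
          convexHull ℝ (Set.range p) = ∅)
    (H : Finset (EuclideanSpace ℝ (Fin d) × ℝ)) :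
    (convexHull ℝ (Set.range p) ⊆
        ⋃ h ∈ H, {x : EuclideanSpace ℝ (Fin d) |
          x ∈ affineSpan ℝ (Set.range p) ∧ ⟪h.1, x⟫ ≤ h.2})
      ↔ ∃ (H' : Finset (EuclideanSpace ℝ (Fin d) × ℝ)) (I : Finset (Fin (k + 1))),
          H' ⊆ H ∧ H'.card + I.card = k + 1 ∧
          (↑(affineSpan ℝ (Set.range p)) : Set (EuclideanSpace ℝ (Fin d))) ⊆
            (⋃ h ∈ H', {x : EuclideanSpace ℝ (Fin d) |
                x ∈ affineSpan ℝ (Set.range p) ∧ ⟪h.1, x⟫ ≤ h.2}) ∪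
            (⋃ i ∈ I, {x : EuclideanSpace ℝ (Fin d) |
                x ∈ affineSpan ℝ (Set.range p) ∧ ⟪a i, x⟫ < b i}) := by
  classical
  set F : AffineSubspace ℝ (EuclideanSpace ℝ (Fin d)) := affineSpan ℝ (Set.range p) with hF
  have hfF : convexHull ℝ (Set.range p) ⊆ (F : Set (EuclideanSpace ℝ (Fin d))) := convexHull_subset_affineSpan _
  have hp0 : p 0 ∈ F := subset_affineSpan ℝ _ ⟨0, rfl⟩
  constructor
  · -- hard direction
    intro hcov
    by_contra hno
    push_neg at hno
    -- work inside the vector span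
    set V := vectorSpan ℝ (Set.range p) with hV
    have hrank : Module.finrank ℝ V = k := hp.finrank_vectorSpan (Fintype.card_fin _)
    -- complements of the halfflats, pulled back to V via v ↦ p 0 + v
    set G : ((EuclideanSpace ℝ (Fin d)) × ℝ) ⊕ Fin (k + 1) → Set V := fun j =>
      match j with
      | Sum.inl h => {v : V | h.2 < ⟪h.1, p 0 + (v : (EuclideanSpace ℝ (Fin d)))⟫}
      | Sum.inr i => {v : V | b i ≤ ⟪a i, p 0 + (v : (EuclideanSpace ℝ (Fin d)))⟫} with hG
    set s : Finset (((EuclideanSpace ℝ (Fin d)) × ℝ) ⊕ Fin (k + 1)) := H.disjSum Finset.univ with hs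
    have hscard : k + 1 ≤ s.card := by
      rw [hs, Finset.card_disjSum, Finset.card_univ, Fintype.card_fin]
      omega
    have hGconv : ∀ j ∈ s, Convex ℝ (G j) := by
      rintro (h | i) _
      · have : IsLinearMap ℝ (fun v : V => ⟪h.1, (v : (EuclideanSpace ℝ (Fin d)))⟫) :=
          ⟨fun x y => by simp [inner_add_right], fun c x => by simp [inner_smul_right]⟩
        have := convex_halfSpace_gt this (h.2 - ⟪h.1, p 0⟫)
        convert this using 1
        on_goal 1 => rfl
        ext v
        simp only [hG, Set.mem_setOf_eq, inner_add_right]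
        constructor <;> intro <;> linarith
      · have : IsLinearMap ℝ (fun v : V => ⟪a i, (v : (EuclideanSpace ℝ (Fin d)))⟫) :=
          ⟨fun x y => by simp [inner_add_right], fun c x => by simp [inner_smul_right]⟩
        have := convex_halfSpace_ge this (b i - ⟪a i, p 0⟫)
        convert this using 1
        on_goal 1 => rfl
        ext v
        simp only [hG, Set.mem_setOf_eq, inner_add_right]
        constructor <;> intro <;> linarith
    have hGinter : ∀ J ⊆ s, J.card ≤ Module.finrank ℝ V + 1 → (⋂ j ∈ J, G j).Nonempty := by
      intro J hJs hJcard
      rw [hrank] at hJcard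
      obtain ⟨J', hJJ', hJ's, hJ'card⟩ := Finset.exists_subsuperset_card_eq hJs hJcard hscard
      suffices hne : (⋂ j ∈ J', G j).Nonempty by
        exact hne.mono (Set.biInter_mono hJJ' fun _ _ => le_rfl)
      set H' : Finset ((EuclideanSpace ℝ (Fin d)) × ℝ) := J'.toLeft with hH'
      set I : Finset (Fin (k + 1)) := J'.toRight with hI
      have hH'H : H' ⊆ H := by
        intro h hh
        have := Finset.mem_toLeft.mp hh
        exact Finset.inl_mem_disjSum.mp (hJ's this)
      have hcards : H'.card + I.card = k + 1 := by
        rw [hH', hI, Finset.card_toLeft_add_card_toRight, hJ'card]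
      have := hno H' I hH'H hcards
      rw [Set.not_subset] at this
      obtain ⟨x, hxF, hxn⟩ := this
      have hxv : x -ᵥ p 0 ∈ V := by
        rw [hV, ← direction_affineSpan ℝ (Set.range p)]
        exact AffineSubspace.vsub_mem_direction hxF hp0
      refine ⟨⟨x -ᵥ p 0, hxv⟩, ?_⟩
      have hxeq : p 0 + (x -ᵥ p 0) = x := by
        simp [vsub_eq_sub]
      rw [Set.mem_iInter₂]
      rintro (h | i) hj
      · have hhH' : h ∈ H' := Finset.mem_toLeft.mpr hj
        have : x ∉ (⋃ h ∈ H', {y : (EuclideanSpace ℝ (Fin d)) | y ∈ F ∧ ⟪h.1, y⟫ ≤ h.2}) := fun hx =>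
          hxn (Set.mem_union_left _ hx)
        have hx' : ¬(x ∈ F ∧ ⟪h.1, x⟫ ≤ h.2) := fun hc =>
          this (Set.mem_biUnion hhH' hc)
        simp only [hG, Set.mem_setOf_eq, hxeq]
        push_neg at hx'
        exact hx' hxF
      · have hiI : i ∈ I := Finset.mem_toRight.mpr hj
        have : x ∉ (⋃ i ∈ I, {y : (EuclideanSpace ℝ (Fin d)) | y ∈ F ∧ ⟪a i, y⟫ < b i}) := fun hx =>
          hxn (Set.mem_union_right _ hx)
        have hx' : ¬(x ∈ F ∧ ⟪a i, x⟫ < b i) := fun hc =>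
          this (Set.mem_biUnion hiI hc)
        simp only [hG, Set.mem_setOf_eq, hxeq]
        push_neg at hx'
        exact hx' hxF
    obtain ⟨v, hv⟩ := Convex.helly_theorem' hGconv hGinter
    set x : (EuclideanSpace ℝ (Fin d)) := p 0 + (v : (EuclideanSpace ℝ (Fin d))) with hx
    have hxF : x ∈ F := by
      have : (v : (EuclideanSpace ℝ (Fin d))) +ᵥ p 0 ∈ F := by
        apply AffineSubspace.vadd_mem_of_mem_direction _ hp0
        rw [hF, direction_affineSpan]
        exact v.2
      simpa [hx, vadd_eq_add, add_comm] using this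
    have hxnotshell : ∀ i, ¬⟪a i, x⟫ < b i := by
      intro i
      have := Set.mem_iInter₂.mp hv (Sum.inr i)
        (by rw [hs]; exact Finset.inr_mem_disjSum.mpr (Finset.mem_univ i))
      simp only [hG, Set.mem_setOf_eq] at this
      rw [← hx] at this
      linarith
    have hxf : x ∈ convexHull ℝ (Set.range p) := by
      by_contra hxnf
      have := hshell_cover ⟨hxF, hxnf⟩
      obtain ⟨_, ⟨i, rfl⟩, _, hlt⟩ := this
      exact hxnotshell i hlt
    obtain ⟨_, ⟨h, rfl⟩, hmem⟩ := hcov hxf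
    simp only [Set.mem_iUnion, Set.mem_setOf_eq] at hmem
    obtain ⟨hhH, _, hle⟩ := hmem
    have := Set.mem_iInter₂.mp hv (Sum.inl h)
      (by rw [hs]; exact Finset.inl_mem_disjSum.mpr hhH)
    simp only [hG, Set.mem_setOf_eq] at this
    rw [← hx] at this
    linarith
  · -- easy direction
    rintro ⟨H', I, hH'H, -, hcov⟩
    intro x hxf
    have hxF : x ∈ F := hfF hxf
    rcases hcov hxF with hx | hx
    · obtain ⟨_, ⟨h, rfl⟩, hmem⟩ := hx
      simp only [Set.mem_iUnion, Set.mem_setOf_eq] at hmem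
      obtain ⟨hhH', hmem⟩ := hmem
      exact Set.mem_biUnion (hH'H hhH') hmem
    · obtain ⟨_, ⟨i, rfl⟩, hmem⟩ := hx
      simp only [Set.mem_iUnion, Set.mem_setOf_eq] at hmem
      obtain ⟨-, hmem⟩ := hmem
      have hcontra : x ∈ ({y : (EuclideanSpace ℝ (Fin d)) | y ∈ F ∧ ⟪a i, y⟫ < b i} ∩
          convexHull ℝ (Set.range p)) := ⟨hmem, hxf⟩
      rw [hshell_disj i] at hcontra
      exact absurd hcontra (Set.notMem_empty x)
end

section
/- Let P ⊆ ℝ^d be finite and in general position, let f be a face of the Voronoi diagram of P with site set sites(f) (the points of P equidistant from and nearest to all points of f), and let F = span(f) be the set of points equidistant from all sites of f. For any point g ∈ ℝ^d ∖ sites(f), the set {x ∈ F : g ∈ interior of the ball centered at x with radius dist(x, sites(f))} is a halfflat of F, namely {x : dist(x,g) < dist(x,s)} ∩ F for any fixed s ∈ sites(f). -/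
open Metric
open scoped RealInnerProductSpace

/-- The set of points `x` of the flat `F` (points equidistant from all sites of a Voronoi
face) whose pencil ball `B(x, dist(x, sites))` contains a point `g ∉ sites` in its
interior equals `{x ∈ F | dist x g < dist x s}` for any fixed site `s`, and this set is a
halfflat of `F`: the intersection of `F` with an open halfspace. -/
theorem pencil_stabbed_is_halfflat (d : ℕ)
    (P sites : Finset (EuclideanSpace ℝ (Fin d)))
    (hsub : sites ⊆ P) (hne : sites.Nonempty)
    (g : EuclideanSpace ℝ (Fin d)) (hg : g ∉ sites)
    (s : EuclideanSpace ℝ (Fin d)) (hs : s ∈ sites) :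
    {x : EuclideanSpace ℝ (Fin d) |
        (∀ s₁ ∈ sites, ∀ s₂ ∈ sites, dist x s₁ = dist x s₂) ∧
        g ∈ ball x (Metric.infDist x (↑sites : Set _))}
      = {x : EuclideanSpace ℝ (Fin d) |
          (∀ s₁ ∈ sites, ∀ s₂ ∈ sites, dist x s₁ = dist x s₂) ∧ dist x g < dist x s} ∧
    ∃ (a : EuclideanSpace ℝ (Fin d)) (b : ℝ), a ≠ 0 ∧
      {x : EuclideanSpace ℝ (Fin d) |
          (∀ s₁ ∈ sites, ∀ s₂ ∈ sites, dist x s₁ = dist x s₂) ∧ dist x g < dist x s}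
        = {x : EuclideanSpace ℝ (Fin d) |
            (∀ s₁ ∈ sites, ∀ s₂ ∈ sites, dist x s₁ = dist x s₂) ∧ ⟪a, x⟫ < b} := by
  have hgs : g ≠ s := fun h => hg (h ▸ hs)
  constructor
  · ext x
    simp only [Set.mem_setOf_eq, Metric.mem_ball]
    constructor
    · rintro ⟨heq, hb⟩
      refine ⟨heq, ?_⟩
      calc dist x g = dist g x := dist_comm x g
        _ < Metric.infDist x (↑sites : Set _) := hb
        _ ≤ dist x s := Metric.infDist_le_dist_of_mem (by exact_mod_cast hs)
    · rintro ⟨heq, hb⟩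
      refine ⟨heq, ?_⟩
      have hinf : Metric.infDist x (↑sites : Set _) = dist x s := by
        refine le_antisymm (Metric.infDist_le_dist_of_mem (by exact_mod_cast hs)) ?_
        by_contra hlt
        push_neg at hlt
        obtain ⟨y, hy, hylt⟩ :=
          (Metric.infDist_lt_iff ⟨s, by exact_mod_cast hs⟩).mp hlt
        rw [heq y (by exact_mod_cast hy) s hs] at hylt
        exact lt_irrefl _ hylt
      rw [hinf, dist_comm]; exact hb
  · refine ⟨(2 : ℝ) • (s - g), ‖s‖ ^ 2 - ‖g‖ ^ 2, ?_, ?_⟩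
    · simp only [ne_eq, smul_eq_zero, sub_eq_zero]
      push_neg
      exact ⟨by norm_num, fun h => hgs h.symm⟩
    · ext x
      simp only [Set.mem_setOf_eq, and_congr_right_iff]
      intro _
      rw [dist_eq_norm, dist_eq_norm, ← Real.sqrt_sq (norm_nonneg (x - g)),
        ← Real.sqrt_sq (norm_nonneg (x - s)),
        Real.sqrt_lt_sqrt_iff (sq_nonneg _)]
      rw [@norm_sub_sq_real, @norm_sub_sq_real]
      rw [inner_smul_left, inner_sub_left]
      simp only [starRingEnd_apply, star_trivial]
      push_cast
      constructor <;> intro h <;> nlinarith [real_inner_comm x s, real_inner_comm x g]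
end

section
/- Let P ⊆ ℝ^d be finite, (P₁, P₂) a partition of P, and X ⊆ ℝ^d a set of points. Then X is a Voronoi separator for (P₁, P₂) if and only if X stabs (contains a point in the interior of) every ball b such that the interior of b contains no point of P and the boundary of b contains at least one point of P₁ and at least one point of P₂. -/
open Metric

/-- Restatement of the Voronoi separation problem as a hitting set problem: `X` is a
Voronoi separator for the partition `(P₁, P₂)` of `P` iff `X` stabs (contains a point in
the interior of) every ball whose interior avoids `P` and whose boundary contains a point
of `P₁` and a point of `P₂`. -/
theorem voronoi_separator_iff_hitting_set (d : ℕ)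
    (P P₁ P₂ : Finset (EuclideanSpace ℝ (Fin d)))
    (hpart : (↑P₁ ∪ ↑P₂ : Set (EuclideanSpace ℝ (Fin d))) = ↑P) (hdisj : Disjoint P₁ P₂)
    (X : Set (EuclideanSpace ℝ (Fin d))) :
    (∀ p₁ ∈ P₁, ∀ p₂ ∈ P₂,
        {x : EuclideanSpace ℝ (Fin d) | ∀ q ∈ (↑P : Set _) ∪ X, dist x p₁ ≤ dist x q} ∩
        {x : EuclideanSpace ℝ (Fin d) | ∀ q ∈ (↑P : Set _) ∪ X, dist x p₂ ≤ dist x q} = ∅)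
      ↔ (∀ (c : EuclideanSpace ℝ (Fin d)) (ρ : ℝ), 0 < ρ →
          (∀ q ∈ P, dist q c ≥ ρ) →
          (∃ q₁ ∈ P₁, dist q₁ c = ρ) → (∃ q₂ ∈ P₂, dist q₂ c = ρ) →
          ∃ x ∈ X, dist x c < ρ) := by
  have hsub : ∀ p, p ∈ P₁ ∨ p ∈ P₂ → p ∈ P := by
    intro p hp
    have : p ∈ (↑P₁ ∪ ↑P₂ : Set (EuclideanSpace ℝ (Fin d))) := by
      rcases hp with h | h <;> simp [h]
    rw [hpart] at this; exact_mod_cast this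
  constructor
  · intro hsep c ρ hρ hint ⟨q₁, hq₁, hdq₁⟩ ⟨q₂, hq₂, hdq₂⟩
    by_contra hX
    push_neg at hX
    have hc : c ∈ {x : EuclideanSpace ℝ (Fin d) |
          ∀ q ∈ (↑P : Set _) ∪ X, dist x q₁ ≤ dist x q} ∩
        {x : EuclideanSpace ℝ (Fin d) |
          ∀ q ∈ (↑P : Set _) ∪ X, dist x q₂ ≤ dist x q} := by
      have key : ∀ q ∈ (↑P : Set _) ∪ X, ρ ≤ dist c q := by
        intro q hq
        rw [dist_comm]
        rcases hq with hq | hq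
        · exact hint q (by exact_mod_cast hq)
        · exact hX q hq
      refine ⟨fun q hq => ?_, fun q hq => ?_⟩
      · rw [dist_comm c q₁, hdq₁]; exact key q hq
      · rw [dist_comm c q₂, hdq₂]; exact key q hq
    rw [hsep q₁ hq₁ q₂ hq₂] at hc
    exact hc
  · intro hhit p₁ hp₁ p₂ hp₂
    ext x
    simp only [Set.mem_inter_iff, Set.mem_setOf_eq, Set.mem_empty_iff_false, iff_false]
    rintro ⟨h1, h2⟩
    have hp₁P : (p₁ : EuclideanSpace ℝ (Fin d)) ∈ (↑P : Set _) ∪ X :=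
      Or.inl (by exact_mod_cast hsub p₁ (Or.inl hp₁))
    have hp₂P : (p₂ : EuclideanSpace ℝ (Fin d)) ∈ (↑P : Set _) ∪ X :=
      Or.inl (by exact_mod_cast hsub p₂ (Or.inr hp₂))
    have h12 : dist x p₁ ≤ dist x p₂ := h1 _ hp₂P
    have h21 : dist x p₂ ≤ dist x p₁ := h2 _ hp₁P
    have heq : dist x p₁ = dist x p₂ := le_antisymm h12 h21
    set ρ := dist x p₁ with hρdef
    have hρpos : 0 < ρ := by
      rcases lt_or_eq_of_le (dist_nonneg : (0:ℝ) ≤ dist x p₁) with h | h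
      · exact h
      · exfalso
        have hx1 : x = p₁ := by rw [← dist_eq_zero]; exact h.symm
        have hx2 : x = p₂ := by rw [← dist_eq_zero, ← heq]; exact h.symm
        exact (Finset.disjoint_left.mp hdisj hp₁) (hx1 ▸ hx2 ▸ hp₂)
    obtain ⟨y, hy, hyd⟩ := hhit x ρ hρpos
      (fun q hq => by rw [dist_comm]; exact h1 _ (Or.inl (by exact_mod_cast hq)))
      ⟨p₁, hp₁, by rw [dist_comm]⟩ ⟨p₂, hp₂, by rw [dist_comm, ← heq]⟩
    have := h1 y (Or.inr hy)
    rw [dist_comm y x] at hyd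
    linarith
end

section
/- Let P ⊆ ℝ^d be a finite set with partition (P₁,P₂) where both parts are nonempty. Then there exists a finite Voronoi separator for (P₁,P₂) of size at most (d+1)·min(|P₁|, |P₂|). -/
open scoped RealInnerProductSpace

noncomputable def vdir (d : ℕ) (i : Fin (d+1)) : EuclideanSpace ℝ (Fin d) :=
  if h : (i : ℕ) < d then EuclideanSpace.single ⟨i, h⟩ 1
  else -∑ j : Fin d, EuclideanSpace.single j 1

lemma vdir_norm_le (d : ℕ) (hd : 0 < d) (i : Fin (d+1)) : ‖vdir d i‖ ≤ d := by
  unfold vdir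
  split
  · rw [EuclideanSpace.norm_single]
    simpa using (show 1 ≤ d from hd)
  · rw [norm_neg]
    calc ‖∑ j : Fin d, EuclideanSpace.single (𝕜 := ℝ) j (1:ℝ)‖
        ≤ ∑ j : Fin d, ‖EuclideanSpace.single (𝕜 := ℝ) j (1:ℝ)‖ := norm_sum_le _ _
      _ = d := by simp

lemma inner_single' (d : ℕ) (u : EuclideanSpace ℝ (Fin d)) (j : Fin d) :
    ⟪u, EuclideanSpace.single j (1:ℝ)⟫ = u j := by
  rw [EuclideanSpace.inner_single_right]; simp

lemma vdir_spans (d : ℕ) (hd : 0 < d) (u : EuclideanSpace ℝ (Fin d)) :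
    ∃ i : Fin (d+1), ((d:ℝ)^2)⁻¹ * ‖u‖ ≤ ⟪u, vdir d i⟫ := by
  by_contra hcon
  push_neg at hcon
  set c : ℝ := ((d:ℝ)^2)⁻¹ with hc_def
  have hd' : (0:ℝ) < d := by exact_mod_cast hd
  have hc : 0 < c := by positivity
  have hlt : ∀ j : Fin d, u j < c * ‖u‖ := by
    intro j
    have h := hcon ⟨j, lt_trans j.2 (Nat.lt_succ_self d)⟩
    unfold vdir at h
    rw [dif_pos (show ((⟨(j:ℕ), _⟩ : Fin (d+1)) : ℕ) < d from j.2)] at h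
    rwa [inner_single'] at h
  have hsum : -(c * ‖u‖) < ∑ j : Fin d, u j := by
    have h := hcon (Fin.last d)
    unfold vdir at h
    rw [dif_neg (by simp [Fin.last])] at h
    rw [inner_neg_right, inner_sum] at h
    simp_rw [inner_single'] at h
    linarith
  have hu0 : 0 < ‖u‖ := by
    rcases eq_or_lt_of_le (norm_nonneg u) with h | h
    · exfalso
      have := hlt ⟨0, hd⟩
      rw [← h] at this
      have hu : u = 0 := by rwa [eq_comm, norm_eq_zero] at h
      simp [hu] at this
    · exact h
  have habs : ∀ j : Fin d, |u j| < d * (c * ‖u‖) := by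
    intro j
    rw [abs_lt]
    constructor
    · have hrest : ∑ k ∈ Finset.univ.erase j, u k ≤ (d - 1) * (c * ‖u‖) := by
        have := Finset.sum_le_card_nsmul (Finset.univ.erase j) u (c * ‖u‖)
          (fun k _ => le_of_lt (hlt k))
        rwa [Finset.card_erase_of_mem (Finset.mem_univ j), Finset.card_univ,
          Fintype.card_fin, nsmul_eq_mul, Nat.cast_sub hd, Nat.cast_one] at this
      have hsplit : u j = (∑ k : Fin d, u k) - ∑ k ∈ Finset.univ.erase j, u k := by
        rw [← Finset.add_sum_erase _ u (Finset.mem_univ j)]; ring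
      rw [hsplit]
      nlinarith
    · calc u j < c * ‖u‖ := hlt j
        _ ≤ d * (c * ‖u‖) := by
          have hd1 : (1:ℝ) ≤ d := Nat.one_le_cast.mpr hd
          nlinarith [mul_pos hc hu0]
  have hn2 : ‖u‖ ^ 2 = ∑ j : Fin d, u j ^ 2 := by
    rw [EuclideanSpace.norm_eq, Real.sq_sqrt (Finset.sum_nonneg fun _ _ => sq_nonneg _)]
    simp [Real.norm_eq_abs, sq_abs]
  have hsum2 : ∑ j : Fin d, u j ^ 2 < ∑ _j : Fin d, (d * (c * ‖u‖)) ^ 2 := by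
    have : Nonempty (Fin d) := Fin.pos_iff_nonempty.mp hd
    refine Finset.sum_lt_sum_of_nonempty Finset.univ_nonempty ?_
    intro j _
    have := habs j
    nlinarith [abs_nonneg (u j), sq_abs (u j)]
  rw [Finset.sum_const, Finset.card_univ, Fintype.card_fin, nsmul_eq_mul] at hsum2
  have hfinal : ∑ j : Fin d, u j ^ 2 < (∑ j : Fin d, u j ^ 2) / d := by
    have hc2 : c = ((d:ℝ)^2)⁻¹ := hc_def
    calc ∑ j : Fin d, u j ^ 2 < d * (d * (c * ‖u‖)) ^ 2 := hsum2
      _ = ‖u‖^2 / d := by field_simp [hc2]; rw [hc2, inv_pow, ← pow_mul]; exact mul_inv_cancel₀ (by positivity)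
      _ = (∑ j : Fin d, u j ^ 2) / d := by rw [hn2]
  have hpos : 0 < ∑ j : Fin d, u j ^ 2 := by rw [← hn2]; positivity
  have : (∑ j : Fin d, u j ^ 2) / d ≤ ∑ j : Fin d, u j ^ 2 := by
    rw [div_le_iff₀ hd']
    have hd1 : (1:ℝ) ≤ d := Nat.one_le_cast.mpr hd
    nlinarith [hpos]
  linarith

open Metric in
lemma key_separator (d : ℕ) (hd : 0 < d) (P A B : Finset (EuclideanSpace ℝ (Fin d)))
    (hA : (↑A : Set (EuclideanSpace ℝ (Fin d))) ⊆ ↑P)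
    (hB : (↑B : Set (EuclideanSpace ℝ (Fin d))) ⊆ ↑P)
    (hne : ∀ a ∈ A, ∀ b ∈ B, a ≠ b)
    (hA0 : A.Nonempty) (hB0 : B.Nonempty) :
    ∃ X : Finset (EuclideanSpace ℝ (Fin d)),
      X.card ≤ (d + 1) * A.card ∧
      ∀ p₁ ∈ A, ∀ p₂ ∈ B,
        {x : EuclideanSpace ℝ (Fin d) | ∀ q ∈ (↑P : Set _) ∪ ↑X, dist x p₁ ≤ dist x q} ∩
        {x : EuclideanSpace ℝ (Fin d) | ∀ q ∈ (↑P : Set _) ∪ ↑X, dist x p₂ ≤ dist x q}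
          = ∅ := by
  classical
  obtain ⟨δ, hδ0, hδ⟩ : ∃ δ > 0, ∀ a ∈ A, ∀ b ∈ B, δ ≤ dist a b := by
    have hs : ((A ×ˢ B).image fun pq => dist pq.1 pq.2).Nonempty :=
      (Finset.Nonempty.product hA0 hB0).image _
    refine ⟨((A ×ˢ B).image fun pq => dist pq.1 pq.2).min' hs, ?_, ?_⟩
    · obtain ⟨v, hv⟩ := Finset.mem_image.mp (Finset.min'_mem _ hs)
      obtain ⟨hvmem, hvd⟩ := hv
      rw [Finset.mem_product] at hvmem
      rw [← hvd]
      exact dist_pos.mpr (hne _ hvmem.1 _ hvmem.2)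
    · intro a ha b hb
      exact Finset.min'_le _ _ (Finset.mem_image.mpr ⟨(a, b),
        Finset.mem_product.mpr ⟨ha, hb⟩, rfl⟩)
  set c : ℝ := ((d:ℝ)^2)⁻¹ with hc_def
  have hd' : (0:ℝ) < d := by exact_mod_cast hd
  have hc : 0 < c := by positivity
  set ε : ℝ := δ * c / (2 * d^2) with hε_def
  have hε : 0 < ε := by positivity
  set X : Finset (EuclideanSpace ℝ (Fin d)) :=
    A.biUnion (fun p => Finset.image (fun i => p + ε • vdir d i) Finset.univ) with hX_def
  refine ⟨X, ?_, ?_⟩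
  · calc X.card ≤ ∑ p ∈ A, (Finset.image (fun i => p + ε • vdir d i) Finset.univ).card :=
        Finset.card_biUnion_le
      _ ≤ ∑ _p ∈ A, (d + 1) := Finset.sum_le_sum fun p _ => by
          simpa using Finset.card_image_le (s := (Finset.univ : Finset (Fin (d+1))))
            (f := fun i => p + ε • vdir d i)
      _ = (d + 1) * A.card := by rw [Finset.sum_const, smul_eq_mul, mul_comm]
  · intro p₁ hp₁ p₂ hp₂
    rw [Set.eq_empty_iff_forall_notMem]
    rintro x ⟨hx₁, hx₂⟩
    simp only [Set.mem_setOf_eq] at hx₁ hx₂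
    have hr₁ : dist x p₁ ≤ dist x p₂ := hx₁ p₂ (Or.inl (hB hp₂))
    have hr₂ : dist x p₂ ≤ dist x p₁ := hx₂ p₁ (Or.inl (hA hp₁))
    have hδ12 : δ ≤ dist p₁ p₂ := hδ _ hp₁ _ hp₂
    by_cases hcase : dist x p₁ ≤ δ / 4
    · have htri : dist p₁ p₂ ≤ dist p₁ x + dist x p₂ := dist_triangle _ _ _
      rw [dist_comm p₁ x] at htri
      linarith
    · push_neg at hcase
      obtain ⟨i, hi⟩ := vdir_spans d hd (x - p₁)
      have hqX : p₁ + ε • vdir d i ∈ X := by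
        rw [hX_def, Finset.mem_biUnion]
        refine ⟨p₁, hp₁, ?_⟩
        rw [Finset.mem_image]
        exact ⟨i, Finset.mem_univ i, rfl⟩
      have hle : dist x p₁ ≤ dist x (p₁ + ε • vdir d i) := hx₁ _ (Or.inr hqX)
      have hnorm : ‖x - p₁‖ = dist x p₁ := (dist_eq_norm x p₁).symm
      have hdq : dist x (p₁ + ε • vdir d i) ^ 2
          = dist x p₁ ^ 2 - 2 * ε * ⟪x - p₁, vdir d i⟫ + ε ^ 2 * ‖vdir d i‖ ^ 2 := by
        rw [dist_eq_norm, show x - (p₁ + ε • vdir d i) = (x - p₁) - ε • vdir d i by abel,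
          @norm_sub_sq_real, real_inner_smul_right, norm_smul, ← dist_eq_norm]
        simp [abs_of_pos hε]
        ring
      have hvle : ‖vdir d i‖ ≤ d := vdir_norm_le d hd i
      have hv0 : (0:ℝ) ≤ ‖vdir d i‖ := norm_nonneg _
      -- dist x q ^ 2 < dist x p₁ ^ 2
      have hq2 : dist x (p₁ + ε • vdir d i) ^ 2 < dist x p₁ ^ 2 := by
        rw [hdq]
        have hi' : c * dist x p₁ ≤ ⟪x - p₁, vdir d i⟫ := by rwa [hnorm] at hi
        have hεd : ε * d ^ 2 = δ * c / 2 := by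
          rw [hε_def]; field_simp
        have h1 : ε * (c * dist x p₁) ≤ ε * ⟪x - p₁, vdir d i⟫ :=
          mul_le_mul_of_nonneg_left hi' hε.le
        have h2 : ‖vdir d i‖ ^ 2 ≤ (d:ℝ) ^ 2 := by nlinarith
        have h3 : ε ^ 2 * ‖vdir d i‖ ^ 2 ≤ ε ^ 2 * (d:ℝ) ^ 2 := by nlinarith [sq_nonneg ε]
        have h4 : ε * c * (δ / 4) < ε * c * dist x p₁ :=
          mul_lt_mul_of_pos_left hcase (mul_pos hε hc)
        have h5 : ε ^ 2 * (d:ℝ) ^ 2 = ε * (δ * c / 2) := by rw [← hεd]; ring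
        nlinarith
      have hle2 : dist x p₁ ^ 2 ≤ dist x (p₁ + ε • vdir d i) ^ 2 :=
        pow_le_pow_left₀ dist_nonneg hle 2
      linarith

open Metric

/-- Every partition `(P₁, P₂)` of a finite point set in `ℝ^d` with both parts nonempty
admits a finite Voronoi separator of size at most `(d+1) · min(|P₁|, |P₂|)`. -/
theorem small_voronoi_separator_exists (d : ℕ)
    (P P₁ P₂ : Finset (EuclideanSpace ℝ (Fin d)))
    (hpart : (↑P₁ ∪ ↑P₂ : Set (EuclideanSpace ℝ (Fin d))) = ↑P) (hdisj : Disjoint P₁ P₂)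
    (h₁ : P₁.Nonempty) (h₂ : P₂.Nonempty) :
    ∃ X : Finset (EuclideanSpace ℝ (Fin d)),
      X.card ≤ (d + 1) * min P₁.card P₂.card ∧
      ∀ p₁ ∈ P₁, ∀ p₂ ∈ P₂,
        {x : EuclideanSpace ℝ (Fin d) | ∀ q ∈ (↑P : Set _) ∪ ↑X, dist x p₁ ≤ dist x q} ∩
        {x : EuclideanSpace ℝ (Fin d) | ∀ q ∈ (↑P : Set _) ∪ ↑X, dist x p₂ ≤ dist x q}
          = ∅ := by
  rcases Nat.eq_zero_or_pos d with hd | hd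
  · exfalso
    obtain ⟨p₁, hp₁⟩ := h₁
    obtain ⟨p₂, hp₂⟩ := h₂
    subst hd
    have : p₁ = p₂ := Subsingleton.elim _ _
    exact Finset.disjoint_left.mp hdisj hp₁ (this ▸ hp₂)
  · have hP₁ : (↑P₁ : Set (EuclideanSpace ℝ (Fin d))) ⊆ ↑P := by
      rw [← hpart]; exact Set.subset_union_left
    have hP₂ : (↑P₂ : Set (EuclideanSpace ℝ (Fin d))) ⊆ ↑P := by
      rw [← hpart]; exact Set.subset_union_right
    rcases le_total P₁.card P₂.card with hle | hle
    · obtain ⟨X, hcard, hsep⟩ := key_separator d hd P P₁ P₂ hP₁ hP₂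
        (fun a ha b hb hab => Finset.disjoint_left.mp hdisj ha (hab ▸ hb)) h₁ h₂
      exact ⟨X, by rwa [min_eq_left hle], hsep⟩
    · obtain ⟨X, hcard, hsep⟩ := key_separator d hd P P₂ P₁ hP₂ hP₁
        (fun a ha b hb hab => Finset.disjoint_left.mp hdisj hb (hab ▸ ha)) h₂ h₁
      refine ⟨X, by rwa [min_eq_right hle], ?_⟩
      intro p₁ hp₁ p₂ hp₂
      rw [Set.inter_comm]
      exact hsep p₂ hp₂ p₁ hp₁
end

section
/- For any point p ∈ ℝ^d, any r > 0, and any λ with 0 < λ ≤ r, there exists a finite set of at most C_d·(r/λ)^{d-1} points around p such that every closed ball of radius at least λ intersecting the sphere ∂B(p,r) contains at least one of these points, where C_d depends only on d. Specifically, a λ-dense set in the annulus B(p, r+2λ) ∖ B(p, r−2λ) suffices. -/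
open Metric MeasureTheory ENNReal

lemma greedy_net {E : Type*} [MetricSpace E] {δ : ℝ} (hδ : 0 < δ) (s : Finset E) :
    ∃ t ⊆ s, (∀ x ∈ t, ∀ y ∈ t, x ≠ y → δ ≤ dist x y) ∧ ∀ x ∈ s, ∃ y ∈ t, dist x y < δ := by
  classical
  induction s using Finset.strongInduction with
  | _ s ih =>
    rcases s.eq_empty_or_nonempty with rfl | ⟨a, ha⟩
    · exact ⟨∅, Finset.Subset.refl _, by simp, by simp⟩
    · set s' := (s.erase a).filter (fun x => δ ≤ dist x a) with hs'
      have hsub : s' ⊆ s := (Finset.filter_subset _ _).trans (Finset.erase_subset _ _)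
      have hne : s' ⊂ s := by
        refine Finset.ssubset_iff_of_subset hsub |>.2 ⟨a, ha, ?_⟩
        simp [hs']
      obtain ⟨t, hts, hsep, hnet⟩ := ih s' hne
      refine ⟨insert a t, Finset.insert_subset ha (hts.trans hsub), ?_, ?_⟩
      · intro x hx y hy hxy
        have key : ∀ z ∈ t, δ ≤ dist a z := fun z hz => by
          have := (Finset.mem_filter.1 (hts hz)).2
          rwa [dist_comm] at this
        rcases Finset.mem_insert.1 hx with hxa | hxt
        · rcases Finset.mem_insert.1 hy with hya | hyt
          · exact absurd (hxa.trans hya.symm) hxy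
          · subst hxa; exact key y hyt
        · rcases Finset.mem_insert.1 hy with hya | hyt
          · subst hya; rw [dist_comm]; exact key x hxt
          · exact hsep x hxt y hyt hxy
      · intro x hx
        by_cases hxa : dist x a < δ
        · exact ⟨a, Finset.mem_insert_self _ _, hxa⟩
        · have hxne : x ≠ a := by rintro rfl; simp at hxa; linarith
          have : x ∈ s' := Finset.mem_filter.2 ⟨Finset.mem_erase.2 ⟨hxne, hx⟩, not_lt.1 hxa⟩
          obtain ⟨y, hy, hxy⟩ := hnet x this
          exact ⟨y, Finset.mem_insert_of_mem hy, hxy⟩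

lemma pow_sub_pow_le_aux {a b : ℝ} (hb : 0 ≤ b) (hab : b ≤ a) :
    ∀ d : ℕ, a ^ (d + 1) - b ^ (d + 1) ≤ (d + 1) * a ^ d * (a - b) := by
  intro d
  induction d with
  | zero => simp
  | succ n ihn =>
    have ha : 0 ≤ a := hb.trans hab
    have h1 : a ^ (n + 2) - b ^ (n + 2) = a * (a ^ (n+1) - b ^ (n+1)) + b ^ (n+1) * (a - b) := by
      ring
    have h2 : b ^ (n+1) ≤ a ^ (n+1) := pow_le_pow_left₀ hb hab _
    have h3 := mul_le_mul_of_nonneg_left ihn ha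
    have h4 := mul_le_mul_of_nonneg_right h2 (sub_nonneg.2 hab)
    push_cast
    calc a ^ (n + 1 + 1) - b ^ (n + 1 + 1)
        = a * (a ^ (n+1) - b ^ (n+1)) + b ^ (n+1) * (a - b) := by ring
      _ ≤ a * ((↑n + 1) * a ^ n * (a - b)) + a ^ (n+1) * (a - b) := add_le_add h3 h4
      _ = (↑n + 1 + 1) * a ^ (n + 1) * (a - b) := by ring

lemma annulus_net (d : ℕ) (hd : 1 ≤ d) (p : EuclideanSpace ℝ (Fin d)) (r lam : ℝ)
    (hlam : 0 < lam) (hlr : lam ≤ r) :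
    ∃ t : Finset (EuclideanSpace ℝ (Fin d)),
      (t.card : ℝ) ≤ ((d : ℝ) * 3 ^ (d - 1) * 4 ^ (d + 1)) * (r / lam) ^ (d - 1) ∧
      ∀ a : EuclideanSpace ℝ (Fin d), r - lam ≤ dist a p → dist a p ≤ r + lam →
        ∃ x ∈ t, dist a x ≤ lam := by
  classical
  haveI : Nontrivial (EuclideanSpace ℝ (Fin d)) := by
    apply Module.nontrivial_of_finrank_pos (R := ℝ)
    rw [finrank_euclideanSpace_fin]; exact hd
  set A : Set (EuclideanSpace ℝ (Fin d)) := closedBall p (r + lam) \ ball p (r - lam) with hA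
  have hAc : IsCompact A := (isCompact_closedBall p _).diff isOpen_ball
  obtain ⟨s0, hs0A, hs0fin, hcov⟩ := hAc.finite_cover_balls (half_pos hlam)
  obtain ⟨t, hts, hsep, hnet⟩ := greedy_net (half_pos hlam) hs0fin.toFinset
  have htA : ∀ x ∈ t, x ∈ A := fun x hx => hs0A (hs0fin.mem_toFinset.1 (hts hx))
  refine ⟨t, ?_, ?_⟩
  · -- cardinality bound
    set ω := volume (ball (0 : EuclideanSpace ℝ (Fin d)) 1) with hω
    have hω0 : ω ≠ 0 := (measure_ball_pos _ _ one_pos).ne'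
    have hωt : ω ≠ ⊤ := measure_ball_lt_top.ne
    set M : ℝ := max (r - 2 * lam) 0 with hM
    have hM0 : 0 ≤ M := le_max_right _ _
    have hMle : M ≤ r + 2 * lam := by
      rcases le_total (r - 2*lam) 0 with h | h
      · rw [hM, max_eq_right h]; linarith
      · rw [hM, max_eq_left h]; linarith
    have hlam4 : (0:ℝ) ≤ lam / 4 := by linarith
    -- disjoint small balls
    have hdisj : (↑t : Set (EuclideanSpace ℝ (Fin d))).PairwiseDisjoint
        (fun x => ball x (lam / 4)) := by
      intro x hx y hy hxy
      apply Set.disjoint_left.2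
      intro z hzx hzy
      simp only [mem_ball] at hzx hzy
      rw [dist_comm] at hzx hzy
      have h1 := dist_triangle x z y
      have h2 := hsep x hx y hy hxy
      rw [dist_comm z y] at h1
      linarith
    have hball : ∀ x : EuclideanSpace ℝ (Fin d), volume (ball x (lam/4)) =
        ENNReal.ofReal ((lam/4) ^ d) * ω := by
      intro x
      rw [hω, Measure.addHaar_ball volume x hlam4, finrank_euclideanSpace_fin]
    have hsum : volume (⋃ x ∈ t, ball x (lam/4)) =
        (t.card : ℝ≥0∞) * (ENNReal.ofReal ((lam/4) ^ d) * ω) := by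
      rw [measure_biUnion_finset hdisj (fun x _ => measurableSet_ball)]
      rw [Finset.sum_congr rfl (fun x _ => hball x), Finset.sum_const, nsmul_eq_mul]
    have hsubR : (⋃ x ∈ t, ball x (lam/4)) ⊆
        ball p (r + 2*lam) \ ball p M := by
      intro z hz
      simp only [Set.mem_iUnion] at hz
      obtain ⟨x, hx, hzx⟩ := hz
      obtain ⟨hx1, hx2⟩ := htA x hx
      rw [mem_closedBall] at hx1
      simp only [mem_ball, not_lt] at hx2
      simp only [mem_ball] at hzx
      have htr1 := dist_triangle z x p
      have htr2 := dist_triangle x z p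
      rw [dist_comm x z] at htr2
      constructor
      · rw [mem_ball]; linarith
      · rw [mem_ball, not_lt, hM]
        exact max_le (by linarith) dist_nonneg
    have hmeasR : volume (ball p (r + 2*lam) \ ball p M) =
        ENNReal.ofReal ((r + 2*lam) ^ d - M ^ d) * ω := by
      have hsub : ball p M ⊆ ball p (r + 2*lam) := ball_subset_ball hMle
      rw [measure_diff hsub measurableSet_ball.nullMeasurableSet
        (measure_ball_lt_top).ne,
        hω, Measure.addHaar_ball volume p (by linarith : (0:ℝ) ≤ r + 2*lam),
        Measure.addHaar_ball volume p hM0, finrank_euclideanSpace_fin,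
        ← ENNReal.sub_mul (fun _ _ => hωt),
        ← ENNReal.ofReal_sub _ (by positivity)]
    have hMpow : M ^ d ≤ (r + 2*lam) ^ d := pow_le_pow_left₀ hM0 hMle d
    have key : (t.card : ℝ) * (lam/4) ^ d ≤ (r + 2*lam) ^ d - M ^ d := by
      have hle : (t.card : ℝ≥0∞) * (ENNReal.ofReal ((lam/4) ^ d) * ω) ≤
          ENNReal.ofReal ((r + 2*lam) ^ d - M ^ d) * ω := by
        rw [← hsum, ← hmeasR]; exact measure_mono hsubR
      rw [← mul_assoc] at hle
      rw [ENNReal.mul_le_mul_iff_left hω0 hωt] at hle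
      rw [← ENNReal.ofReal_natCast, ← ENNReal.ofReal_mul (by positivity)] at hle
      exact (ENNReal.ofReal_le_ofReal_iff (by linarith)).1 hle
    -- now real arithmetic
    obtain ⟨e, rfl⟩ : ∃ e, d = e + 1 := ⟨d - 1, (Nat.succ_pred_eq_of_pos hd).symm⟩
    simp only [Nat.add_sub_cancel] at key ⊢
    have hΔ : (r + 2*lam) ^ (e+1) - M ^ (e+1) ≤ ((e:ℝ)+1) * (3*r) ^ e * (4*lam) := by
      have h1 : (r + 2*lam) ^ (e+1) - M ^ (e+1) ≤
          ((e:ℝ)+1) * (r + 2*lam) ^ e * ((r + 2*lam) - M) :=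
        pow_sub_pow_le_aux hM0 hMle e
      have h2 : (r + 2*lam) - M ≤ 4 * lam := by
        rcases le_total (r - 2*lam) 0 with h | h
        · rw [hM, max_eq_right h]; linarith
        · rw [hM, max_eq_left h]; linarith
      have h3 : (r + 2*lam) ^ e ≤ (3*r) ^ e :=
        pow_le_pow_left₀ (by linarith) (by linarith) e
      calc (r + 2*lam) ^ (e+1) - M ^ (e+1)
          ≤ ((e:ℝ)+1) * (r + 2*lam) ^ e * ((r + 2*lam) - M) := h1
        _ ≤ ((e:ℝ)+1) * (3*r) ^ e * (4*lam) := by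
            have hr0 : (0:ℝ) < r := lt_of_lt_of_le hlam hlr
            apply mul_le_mul (by
              apply mul_le_mul_of_nonneg_left h3 (by positivity)) h2
              (by linarith [hM0, hMle]) (by positivity)
    have hpow : (0:ℝ) < (lam/4) ^ (e+1) := by positivity
    rw [← mul_le_mul_iff_left₀ hpow]
    calc (t.card : ℝ) * (lam/4) ^ (e+1)
        ≤ (r + 2*lam) ^ (e+1) - M ^ (e+1) := key
      _ ≤ ((e:ℝ)+1) * (3*r) ^ e * (4*lam) := hΔ
      _ = (((e:ℝ)+1) * 3 ^ e * 4 ^ (e+1+1)) * (r/lam) ^ e * (lam/4) ^ (e+1) := by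
          field_simp
          have hl : lam ^ e * lam⁻¹ ^ e = 1 := by rw [← mul_pow, mul_inv_cancel₀ hlam.ne', one_pow]
          have h4 : (1/4:ℝ) ^ e * 4 ^ e = 1 := by rw [← mul_pow]; norm_num
          linear_combination (-(r^e*lam*3^e*4) * (lam ^ e * lam⁻¹ ^ e)) * h4 + (-(r^e*lam*3^e*4)) * hl
      _ = (↑(e+1) * 3 ^ e * 4 ^ (e+1+1)) * (r/lam) ^ e * (lam/4) ^ (e+1) := by
          push_cast; ring
  · -- net property
    intro a ha1 ha2
    have haA : a ∈ A := ⟨mem_closedBall.2 ha2, fun h => absurd (mem_ball.1 h) (not_lt.2 ha1)⟩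
    obtain ⟨x0, hx0⟩ := Set.mem_iUnion₂.1 (hcov haA)
    obtain ⟨hx0s, hax0⟩ := hx0
    obtain ⟨y, hyt, hy⟩ := hnet x0 (hs0fin.mem_toFinset.2 hx0s)
    refine ⟨y, hyt, ?_⟩
    calc dist a y ≤ dist a x0 + dist x0 y := dist_triangle _ _ _
      _ ≤ lam/2 + lam/2 := add_le_add (le_of_lt (mem_ball.1 hax0)) hy.le
      _ = lam := by ring

/-- Shielding a sphere: for every `d` there is a constant `C` such that for any `p`,
`r > 0` and `0 < λ ≤ r`, there is a set of at most `C · (r/λ)^(d-1)` points such that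
every closed ball of radius at least `λ` intersecting the sphere `∂B(p,r)` contains one
of these points. -/
theorem shield_sphere (d : ℕ) :
    ∃ C : ℝ, 0 < C ∧
      ∀ (p : EuclideanSpace ℝ (Fin d)) (r lam : ℝ), 0 < lam → lam ≤ r →
        ∃ X : Finset (EuclideanSpace ℝ (Fin d)),
          (X.card : ℝ) ≤ C * (r / lam) ^ (d - 1) ∧
          ∀ (c : EuclideanSpace ℝ (Fin d)) (ρ : ℝ), lam ≤ ρ →
            (closedBall c ρ ∩ sphere p r).Nonempty →
            ∃ x ∈ X, x ∈ closedBall c ρ := by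
  rcases Nat.eq_zero_or_pos d with rfl | hd
  · refine ⟨1, one_pos, fun p r lam hlam hlr => ⟨{0}, by norm_num, ?_⟩⟩
    intro c ρ hρ _
    refine ⟨0, Finset.mem_singleton_self _, ?_⟩
    rw [mem_closedBall, Subsingleton.elim (0 : EuclideanSpace ℝ (Fin 0)) c, dist_self]
    linarith
  · have hdR : (0:ℝ) < d := by exact_mod_cast hd
    refine ⟨(d : ℝ) * 3 ^ (d - 1) * 4 ^ (d + 1), by positivity, fun p r lam hlam hlr => ?_⟩
    obtain ⟨t, hcard, hnet⟩ := annulus_net d hd p r lam hlam hlr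
    refine ⟨t, hcard, ?_⟩
    rintro c ρ hρ ⟨q, hqc, hqs⟩
    rw [mem_closedBall] at hqc
    rw [mem_sphere] at hqs
    by_cases hD : dist c q ≤ lam
    · have h1 : r - lam ≤ dist c p := by
        have h := dist_triangle q c p
        rw [dist_comm q c] at h
        linarith
      have h2 : dist c p ≤ r + lam := by
        calc dist c p ≤ dist c q + dist q p := dist_triangle _ _ _
          _ ≤ lam + r := by rw [hqs]; linarith
          _ = r + lam := by ring
      obtain ⟨x, hxt, hx⟩ := hnet c h1 h2
      refine ⟨x, hxt, mem_closedBall.2 ?_⟩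
      rw [dist_comm]
      linarith
    · push_neg at hD
      have hD0 : (0:ℝ) < dist c q := lt_trans hlam hD
      set m : EuclideanSpace ℝ (Fin d) := q + (lam / dist c q) • (c - q) with hm
      have hmq : dist m q = lam := by
        rw [hm, dist_eq_norm, add_sub_cancel_left, norm_smul, Real.norm_eq_abs,
          abs_of_pos (div_pos hlam hD0), ← dist_eq_norm, dist_comm c q, dist_comm q c]
        field_simp
      have hmc : dist m c = dist c q - lam := by
        have key : m - c = (lam / dist c q - 1) • (c - q) := by
          rw [hm, sub_smul, one_smul]; abel
        have hlt : lam / dist c q - 1 < 0 := by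
          rw [sub_neg]; exact (div_lt_one hD0).2 hD
        rw [dist_eq_norm, key, norm_smul, Real.norm_eq_abs, abs_of_neg hlt,
          ← dist_eq_norm, dist_comm c q, dist_comm q c]
        field_simp
        ring

      have h1 : r - lam ≤ dist m p := by
        have h := dist_triangle q m p
        rw [dist_comm q m, hmq] at h
        linarith
      have h2 : dist m p ≤ r + lam := by
        calc dist m p ≤ dist m q + dist q p := dist_triangle _ _ _
          _ ≤ lam + r := by rw [hmq, hqs]
          _ = r + lam := by ring
      obtain ⟨x, hxt, hx⟩ := hnet m h1 h2
      refine ⟨x, hxt, mem_closedBall.2 ?_⟩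
      calc dist x c ≤ dist x m + dist m c := dist_triangle _ _ _
        _ ≤ lam + (dist c q - lam) := by
            rw [dist_comm x m]; exact add_le_add hx (le_of_eq hmc)
        _ = dist c q := by ring
        _ ≤ ρ := by rw [dist_comm]; exact hqc
end
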